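/- Let a_{j,k} ∈ ℂ (1 ≤ j < k ≤ n+1) and let F = F(a) be the associated filtration of V = ℂ^{n+1}. Then both N_0 and N_1 satisfy Griffiths transversality with respect to F if and only if a_{j,k} = 0 for every pair (j,k) with (j,k) ≠ (1, n+1). -/
import Mathlib


open Complex

noncomputable section

/-- The nilpotent endomorphism `N₀` (as a matrix, with 0-based indices:
Lean index `j` corresponds to the paper's index `j+1`):
`N₀ e_j = e_{j-1}` for `1 ≤ j ≤ n-1` (paper: `2 ≤ j ≤ n`), `N₀ e_0 = N₀ e_n = 0`. -/
def N0 (n : ℕ) : Matrix (Fin (n + 1)) (Fin (n + 1)) ℂ :=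
  fun i j => if (i : ℕ) + 1 = (j : ℕ) ∧ (j : ℕ) < n then 1 else 0

/-- The vector `w_k = e_k + ∑_{j<k} a_{j,k} e_j`, where `a` uses the paper's
1-based indices (so `a (i+1) (k+1)` for Lean indices `i < k`). -/
def w (n : ℕ) (a : ℕ → ℕ → ℂ) (k : Fin (n + 1)) : Fin (n + 1) → ℂ :=
  fun i => if i = k then 1 else if (i : ℕ) < (k : ℕ) then a ((i : ℕ) + 1) ((k : ℕ) + 1) else 0

/-- The decreasing filtration `F = F(a)`: `F^p = 0` for `p ≥ 1`, and for `p ≤ 0`,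
`F^p` is spanned by the `w_k` with (paper) `n+1+p ≤ k ≤ n+1`. -/
def Filt (n : ℕ) (a : ℕ → ℕ → ℂ) : ℤ → Submodule ℂ (Fin (n + 1) → ℂ) :=
  fun p => if 1 ≤ p then ⊥
    else Submodule.span ℂ {v | ∃ k : Fin (n + 1), (n : ℤ) + p ≤ (k : ℕ) ∧ v = w n a k}

/-- `N` satisfies Griffiths transversality with respect to `F(a)`: `N F^p ⊆ F^{p-1}`. -/
def GriffithsTransversal (n : ℕ) (N : Matrix (Fin (n + 1)) (Fin (n + 1)) ℂ)
    (a : ℕ → ℕ → ℂ) : Prop :=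
  ∀ p : ℤ, ∀ v ∈ Filt n a p, N.mulVec v ∈ Filt n a (p - 1)


/-- The nilpotent endomorphism `N₁` (0-based indices): `N₁ e_n = -e_{n-1}`
(paper: `N₁ e_{n+1} = -e_n`), and `N₁ e_j = 0` otherwise. -/
def N1 (n : ℕ) : Matrix (Fin (n + 1)) (Fin (n + 1)) ℂ :=
  fun i j => if (i : ℕ) + 1 = n ∧ (j : ℕ) = n then -1 else 0

namespace GTAux

lemma w_apply (n : ℕ) (a : ℕ → ℕ → ℂ) (k i : Fin (n + 1)) :
    w n a k i = if (i : ℕ) = (k : ℕ) then 1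
      else if (i : ℕ) < (k : ℕ) then a ((i : ℕ) + 1) ((k : ℕ) + 1) else 0 := by
  simp only [w, Fin.ext_iff]

lemma w_self (n : ℕ) (a : ℕ → ℕ → ℂ) (k : Fin (n + 1)) : w n a k k = 1 := by
  rw [w_apply, if_pos rfl]

lemma w_gt (n : ℕ) (a : ℕ → ℕ → ℂ) {k i : Fin (n + 1)} (h : (k : ℕ) < (i : ℕ)) :
    w n a k i = 0 := by
  rw [w_apply, if_neg (by omega), if_neg (by omega)]

lemma N0_mulVec (n : ℕ) (v : Fin (n + 1) → ℂ) (i : Fin (n + 1)) :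
    (N0 n).mulVec v i = if h : (i : ℕ) + 1 < n then v ⟨(i : ℕ) + 1, by omega⟩ else 0 := by
  simp only [Matrix.mulVec, dotProduct, N0]
  split
  · next h =>
    rw [Finset.sum_eq_single (⟨(i : ℕ) + 1, by omega⟩ : Fin (n + 1))]
    · simp [h]
    · intro j _ hj
      rw [if_neg, zero_mul]
      rintro ⟨h1, h2⟩
      exact hj (Fin.ext h1.symm)
    · simp
  · next h =>
    apply Finset.sum_eq_zero
    intro j _
    rw [if_neg, zero_mul]
    rintro ⟨h1, h2⟩
    omega

lemma N1_mulVec (n : ℕ) (hn : 1 ≤ n) (v : Fin (n + 1) → ℂ) (i : Fin (n + 1)) :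
    (N1 n).mulVec v i = if (i : ℕ) + 1 = n then -(v ⟨n, by omega⟩) else 0 := by
  simp only [Matrix.mulVec, dotProduct, N1]
  split
  · next h =>
    rw [Finset.sum_eq_single (⟨n, by omega⟩ : Fin (n + 1))]
    · simp [h]
    · intro j _ hj
      rw [if_neg, zero_mul]
      rintro ⟨h1, h2⟩
      exact hj (Fin.ext h2)
    · simp
  · next h =>
    apply Finset.sum_eq_zero
    intro j _
    rw [if_neg, zero_mul]
    rintro ⟨h1, h2⟩
    omega

/-- The generating family with threshold `t`. -/
def gg (n t : ℕ) (a : ℕ → ℕ → ℂ) : Fin (n + 1) → (Fin (n + 1) → ℂ) :=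
  fun k => if t ≤ (k : ℕ) then w n a k else 0

lemma span_eq (n t : ℕ) (a : ℕ → ℕ → ℂ) :
    Submodule.span ℂ {u | ∃ k : Fin (n + 1), t ≤ (k : ℕ) ∧ u = w n a k}
      = Submodule.span ℂ (Set.range (gg n t a)) := by
  apply le_antisymm <;> rw [Submodule.span_le]
  · rintro u ⟨k, hk, rfl⟩
    exact Submodule.subset_span ⟨k, by simp [gg, hk]⟩
  · rintro u ⟨k, rfl⟩
    by_cases h : t ≤ (k : ℕ)
    · exact Submodule.subset_span ⟨k, h, by simp [gg, h]⟩
    · rw [show gg n t a k = 0 from if_neg h]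
      exact Submodule.zero_mem _

lemma exists_alpha {n t : ℕ} {a : ℕ → ℕ → ℂ} {v : Fin (n + 1) → ℂ}
    (hv : v ∈ Submodule.span ℂ {u | ∃ k : Fin (n + 1), t ≤ (k : ℕ) ∧ u = w n a k}) :
    ∃ α : Fin (n + 1) → ℂ, ∑ k, α k • gg n t a k = v := by
  rw [span_eq, Submodule.mem_span_range_iff_exists_fun] at hv
  exact hv

lemma gsum_apply (n t : ℕ) (a : ℕ → ℕ → ℂ) (α : Fin (n + 1) → ℂ) (i : Fin (n + 1)) :
    (∑ k, α k • gg n t a k) i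
      = (if t ≤ (i : ℕ) then α i else 0)
        + ∑ k : Fin (n + 1), (if t ≤ (k : ℕ) ∧ (i : ℕ) < (k : ℕ)
            then α k * a ((i : ℕ) + 1) ((k : ℕ) + 1) else 0) := by
  rw [Finset.sum_apply]
  have hterm : ∀ k : Fin (n + 1), (α k • gg n t a k) i
      = (if k = i then (if t ≤ (i : ℕ) then α i else 0) else 0)
        + (if t ≤ (k : ℕ) ∧ (i : ℕ) < (k : ℕ)
            then α k * a ((i : ℕ) + 1) ((k : ℕ) + 1) else 0) := by
    intro k
    have happ : gg n t a k i = if t ≤ (k : ℕ) then w n a k i else 0 := by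
      rw [gg]; split <;> rfl
    rw [Pi.smul_apply, happ, smul_eq_mul]
    rcases lt_trichotomy (i : ℕ) (k : ℕ) with hik | hik | hik
    · have hne : k ≠ i := fun e => by rw [e] at hik; omega
      rw [if_neg hne, zero_add]
      by_cases ht : t ≤ (k : ℕ)
      · rw [if_pos ht, if_pos ⟨ht, hik⟩, w_apply, if_neg (by omega), if_pos hik]
      · rw [if_neg ht, if_neg (fun hc => ht hc.1), mul_zero]
    · have he : k = i := Fin.ext hik.symm
      subst he
      rw [if_pos rfl, if_neg (show ¬(t ≤ (k : ℕ) ∧ (k : ℕ) < (k : ℕ)) from by omega),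
        add_zero, w_self]
      by_cases ht : t ≤ (k : ℕ)
      · rw [if_pos ht, if_pos ht, mul_one]
      · rw [if_neg ht, if_neg ht, mul_zero]
    · have hne : k ≠ i := fun e => by rw [e] at hik; omega
      rw [if_neg hne, zero_add, if_neg (by omega : ¬(t ≤ (k : ℕ) ∧ (i : ℕ) < (k : ℕ)))]
      by_cases ht : t ≤ (k : ℕ)
      · rw [if_pos ht, w_gt n a hik, mul_zero]
      · rw [if_neg ht, mul_zero]
  rw [Finset.sum_congr rfl (fun k _ => hterm k), Finset.sum_add_distrib,
    Finset.sum_ite_eq' Finset.univ i]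
  simp

lemma alpha_zero {n : ℕ} (t s : ℕ) {a : ℕ → ℕ → ℂ} (hts : t ≤ s) (α : Fin (n + 1) → ℂ)
    (h0 : ∀ m : Fin (n + 1), s ≤ (m : ℕ) → (∑ k, α k • gg n t a k) m = 0) :
    ∀ m : Fin (n + 1), s ≤ (m : ℕ) → α m = 0 := by
  suffices H : ∀ d : ℕ, ∀ m : Fin (n + 1), n - (m : ℕ) ≤ d → s ≤ (m : ℕ) → α m = 0 by
    exact fun m hm => H (n - (m : ℕ)) m le_rfl hm
  intro d
  induction d with
  | zero =>
    intro m hd hm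
    have h := h0 m hm
    rw [gsum_apply, if_pos (le_trans hts hm)] at h
    have hz : ∀ k : Fin (n + 1),
        (if t ≤ (k : ℕ) ∧ (m : ℕ) < (k : ℕ)
          then α k * a ((m : ℕ) + 1) ((k : ℕ) + 1) else 0) = 0 := by
      intro k
      rw [if_neg]
      rintro ⟨-, h2⟩
      have := k.isLt
      omega
    rw [Finset.sum_congr rfl (fun k _ => hz k), Finset.sum_const_zero, add_zero] at h
    exact h
  | succ d ih =>
    intro m hd hm
    have h := h0 m hm
    rw [gsum_apply, if_pos (le_trans hts hm)] at h
    have hz : ∀ k : Fin (n + 1),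
        (if t ≤ (k : ℕ) ∧ (m : ℕ) < (k : ℕ)
          then α k * a ((m : ℕ) + 1) ((k : ℕ) + 1) else 0) = 0 := by
      intro k
      split
      · next hk =>
        obtain ⟨hk1, hk2⟩ := hk
        rw [ih k (by omega) (by omega), zero_mul]
      · rfl
    rw [Finset.sum_congr rfl (fun k _ => hz k), Finset.sum_const_zero, add_zero] at h
    exact h

lemma eq_zero_of_vanish {n t : ℕ} {a : ℕ → ℕ → ℂ} {v : Fin (n + 1) → ℂ}
    (hv : v ∈ Submodule.span ℂ {u | ∃ k : Fin (n + 1), t ≤ (k : ℕ) ∧ u = w n a k})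
    (h0 : ∀ m : Fin (n + 1), t ≤ (m : ℕ) → v m = 0) :
    v = 0 := by
  obtain ⟨α, hα⟩ := exists_alpha hv
  have hz : ∀ m : Fin (n + 1), t ≤ (m : ℕ) → α m = 0 :=
    alpha_zero t t le_rfl α (fun m hm => by rw [hα]; exact h0 m hm)
  funext i
  rw [← hα, gsum_apply]
  have hsum : ∀ k : Fin (n + 1),
      (if t ≤ (k : ℕ) ∧ (i : ℕ) < (k : ℕ)
        then α k * a ((i : ℕ) + 1) ((k : ℕ) + 1) else 0) = 0 := by
    intro k
    split
    · next hk => rw [hz k hk.1, zero_mul]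
    · rfl
  rw [Finset.sum_congr rfl (fun k _ => hsum k), Finset.sum_const_zero, add_zero]
  by_cases ht : t ≤ (i : ℕ)
  · rw [if_pos ht, hz i ht]; rfl
  · rw [if_neg ht]; rfl

lemma eval_of_vanish {n t : ℕ} {a : ℕ → ℕ → ℂ} {v : Fin (n + 1) → ℂ} (htn : t ≤ n)
    (hv : v ∈ Submodule.span ℂ {u | ∃ k : Fin (n + 1), t ≤ (k : ℕ) ∧ u = w n a k})
    (h0 : ∀ m : Fin (n + 1), t < (m : ℕ) → v m = 0) :
    ∀ i : Fin (n + 1), (i : ℕ) < t →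
      v i = v ⟨t, by omega⟩ * a ((i : ℕ) + 1) (t + 1) := by
  obtain ⟨α, hα⟩ := exists_alpha hv
  have hz : ∀ m : Fin (n + 1), t + 1 ≤ (m : ℕ) → α m = 0 :=
    alpha_zero t (t + 1) (by omega) α
      (fun m hm => by rw [hα]; exact h0 m (by omega))
  have hvt : v ⟨t, by omega⟩ = α ⟨t, by omega⟩ := by
    rw [← hα, gsum_apply]
    simp only [Fin.val_mk]
    have hsum : ∀ k : Fin (n + 1),
        (if t ≤ (k : ℕ) ∧ t < (k : ℕ)
          then α k * a (t + 1) ((k : ℕ) + 1) else 0) = 0 := by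
      intro k
      split
      · next hk => rw [hz k (by omega), zero_mul]
      · rfl
    rw [Finset.sum_congr rfl (fun k _ => hsum k), Finset.sum_const_zero, add_zero,
      if_pos le_rfl]
  intro i hi
  rw [show v ⟨t, by omega⟩ = α ⟨t, by omega⟩ from hvt, ← hα, gsum_apply,
    if_neg (by omega), zero_add, Finset.sum_eq_single (⟨t, by omega⟩ : Fin (n + 1))]
  · simp only [Fin.val_mk]
    rw [if_pos ⟨le_rfl, hi⟩]
  · intro k _ hk
    split
    · next hc =>
      have hkt : t + 1 ≤ (k : ℕ) := by
        rcases Nat.lt_or_ge t (k : ℕ) with h | h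
        · omega
        · exact absurd (Fin.ext (by omega : (k : ℕ) = t)) hk
      rw [hz k hkt, zero_mul]
    · rfl
  · simp

lemma Filt_eq (n : ℕ) (a : ℕ → ℕ → ℂ) {p : ℤ} (hp : p ≤ 0) {t : ℕ}
    (ht : ((n : ℤ) + p).toNat = t) :
    Filt n a p = Submodule.span ℂ {u | ∃ k : Fin (n + 1), t ≤ (k : ℕ) ∧ u = w n a k} := by
  simp only [Filt]
  rw [if_neg (by omega)]
  congr 1
  ext u
  exact ⟨fun ⟨k, hk, hu⟩ => ⟨k, by omega, hu⟩, fun ⟨k, hk, hu⟩ => ⟨k, by omega, hu⟩⟩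

end GTAux

open GTAux

/-- Both `(N₀, F)` and `(N₁, F)` satisfy Griffiths transversality iff `a_{j,k} = 0`
for every pair `(j,k)` with `1 ≤ j < k ≤ n+1` and `(j,k) ≠ (1, n+1)`. -/
theorem griffiths_transversality_N0_and_N1_iff (n : ℕ) (hn : 1 ≤ n) (a : ℕ → ℕ → ℂ) :
    (GriffithsTransversal n (N0 n) a ∧ GriffithsTransversal n (N1 n) a) ↔
      (∀ j k : ℕ, 1 ≤ j → j < k → k ≤ n + 1 → ¬(j = 1 ∧ k = n + 1) → a j k = 0) := by
  constructor
  · rintro ⟨h0, h1⟩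
    -- the top vector w_n lies in F^0
    have wn_mem : w n a ⟨n, by omega⟩ ∈ Filt n a 0 := by
      rw [Filt_eq n a (by omega) (show ((n : ℤ) + 0).toNat = n by omega)]
      exact Submodule.subset_span ⟨⟨n, by omega⟩, by simp, rfl⟩
    -- Step A : a j n = 0 for 1 ≤ j < n  (from N1)
    have hA : ∀ j : ℕ, 1 ≤ j → j < n → a j n = 0 := by
      intro j hj1 hjn
      have hm := h1 0 _ wn_mem
      rw [Filt_eq n a (by omega) (show ((n : ℤ) + (0 - 1)).toNat = n - 1 by omega)] at hm
      have hvi : ∀ i : Fin (n + 1), Matrix.mulVec (N1 n) (w n a ⟨n, by omega⟩) i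
          = if (i : ℕ) + 1 = n then -1 else 0 := by
        intro i
        rw [N1_mulVec n hn]
        split
        · rw [w_self]
        · rfl
      have hvan : ∀ m : Fin (n + 1), n - 1 < (m : ℕ) →
          Matrix.mulVec (N1 n) (w n a ⟨n, by omega⟩) m = 0 := by
        intro m hm'
        rw [hvi, if_neg (by have := m.isLt; omega)]
      have key := eval_of_vanish (by omega) hm hvan ⟨j - 1, by omega⟩ (by simpa using by omega)
      rw [hvi, hvi] at key
      simp only at key
      rw [if_neg (by omega), if_pos (by omega)] at key
      have : a (j - 1 + 1) (n - 1 + 1) = 0 := by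
        have h' : (0 : ℂ) = -1 * a (j - 1 + 1) (n - 1 + 1) := key
        rw [neg_one_mul] at h'
        exact neg_eq_zero.mp h'.symm
      rwa [show j - 1 + 1 = j by omega, show n - 1 + 1 = n by omega] at this
    -- Step B : a j (n+1) = 0 for 2 ≤ j ≤ n  (from N0 at p = 0)
    have hB : ∀ j : ℕ, 2 ≤ j → j ≤ n → a j (n + 1) = 0 := by
      intro j hj2 hjn
      have hm := h0 0 _ wn_mem
      rw [Filt_eq n a (by omega) (show ((n : ℤ) + (0 - 1)).toNat = n - 1 by omega)] at hm
      have hvan : ∀ m : Fin (n + 1), n - 1 ≤ (m : ℕ) →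
          Matrix.mulVec (N0 n) (w n a ⟨n, by omega⟩) m = 0 := by
        intro m hm'
        rw [N0_mulVec, dif_neg (by omega)]
      have hzero := eq_zero_of_vanish hm hvan
      have := congrFun hzero ⟨j - 2, by omega⟩
      rw [N0_mulVec, dif_pos (by simpa using by omega)] at this
      rw [w_apply] at this
      simp only [Pi.zero_apply] at this
      rw [if_neg (by omega), if_pos (by omega)] at this
      rwa [show j - 2 + 1 + 1 = j by omega] at this
    -- Step C : the shift relation from N0 at p = k - n
    have hC : ∀ j k : ℕ, 2 ≤ j → j < k → k ≤ n → a j k = a (j - 1) (k - 1) := by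
      intro j k hj2 hjk hkn
      have hK1 : 1 ≤ k - 1 := by omega
      have hKn : k - 1 ≤ n - 1 := by omega
      have hwK : w n a ⟨k - 1, by omega⟩ ∈ Filt n a ((k : ℤ) - 1 - n) := by
        rw [Filt_eq n a (by omega) (show ((n : ℤ) + ((k : ℤ) - 1 - n)).toNat = k - 1 by omega)]
        exact Submodule.subset_span ⟨⟨k - 1, by omega⟩, by simp, rfl⟩
      have hm := h0 _ _ hwK
      rw [Filt_eq n a (by omega)
        (show ((n : ℤ) + ((k : ℤ) - 1 - n - 1)).toNat = k - 2 by omega)] at hm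
      have hvan : ∀ m : Fin (n + 1), k - 2 < (m : ℕ) →
          Matrix.mulVec (N0 n) (w n a ⟨k - 1, by omega⟩) m = 0 := by
        intro m hm'
        rw [N0_mulVec]
        split
        · rw [w_apply]
          rw [if_neg (by simpa using by omega), if_neg (by simpa using by omega)]
        · rfl
      have key := eval_of_vanish (by omega) hm hvan ⟨j - 2, by omega⟩
        (by simpa using by omega)
      rw [N0_mulVec, N0_mulVec] at key
      rw [dif_pos (by simpa using by omega), dif_pos (by simpa using by omega)] at key
      rw [w_apply, w_apply] at key
      simp only at key
      rw [if_neg (by omega), if_pos (by omega), if_pos (by omega), one_mul] at key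
      rw [show j - 2 + 1 + 1 = j by omega, show k - 1 + 1 = k by omega,
        show j - 2 + 1 = j - 1 by omega, show k - 2 + 1 = k - 1 by omega] at key
      exact key
    -- combine
    intro j k hj1 hjk hkn1 hne
    rcases Nat.lt_or_ge k (n + 1) with hk | hk
    · -- k ≤ n : shift up to column n
      have main : ∀ d : ℕ, ∀ j k : ℕ, 1 ≤ j → j < k → k + d = n → a j k = 0 := by
        intro d
        induction d with
        | zero => intro j k hj1 hjk hkd; rw [show k = n by omega] at hjk ⊢; exact hA j hj1 hjk
        | succ d ih =>
          intro j k hj1 hjk hkd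
          have := hC (j + 1) (k + 1) (by omega) (by omega) (by omega)
          rw [show j + 1 - 1 = j by omega, show k + 1 - 1 = k by omega] at this
          rw [← this]
          exact ih (j + 1) (k + 1) (by omega) (by omega) (by omega)
      exact main (n - k) j k hj1 hjk (by omega)
    · -- k = n + 1 : j ≥ 2, use hB
      have hk' : k = n + 1 := by omega
      have hj2 : 2 ≤ j := by
        rcases Nat.lt_or_ge j 2 with h | h
        · exact absurd ⟨by omega, hk'⟩ hne
        · exact h
      rw [hk']
      exact hB j hj2 (by omega)
  · intro hz
    have hw : ∀ k : Fin (n + 1), (k : ℕ) < n → ∀ i : Fin (n + 1),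
        w n a k i = if (i : ℕ) = (k : ℕ) then 1 else 0 := by
      intro k hk i
      rw [w_apply]
      by_cases hik : (i : ℕ) = (k : ℕ)
      · rw [if_pos hik, if_pos hik]
      · rw [if_neg hik, if_neg hik]
        split
        · next h => exact hz _ _ (by omega) (by omega) (by omega) (by rintro ⟨-, h2⟩; omega)
        · rfl
    constructor
    · -- N0
      intro p v hv
      by_cases hp : 1 ≤ p
      · have hv0 : v = 0 := by
          rw [show Filt n a p = ⊥ from if_pos hp] at hv
          simpa using hv
        rw [hv0, Matrix.mulVec_zero]
        exact Submodule.zero_mem _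
      · push_neg at hp
        rw [Filt_eq n a (by omega) rfl] at hv
        rw [Filt_eq n a (by omega) rfl]
        induction hv using Submodule.span_induction with
        | mem u hu =>
          obtain ⟨k, hk, rfl⟩ := hu
          rcases Nat.eq_zero_or_pos (k : ℕ) with hk0 | hk1
          · have heq : Matrix.mulVec (N0 n) (w n a k) = 0 := by
              funext i
              rw [N0_mulVec, Pi.zero_apply]
              split
              · next h => rw [hw k (by omega), if_neg (by simpa using by omega)]
              · rfl
            rw [heq]
            exact Submodule.zero_mem _
          · rcases Nat.lt_or_ge (k : ℕ) n with hkn | hkn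
            · -- N0 w_k = w_{k-1}
              have heq : Matrix.mulVec (N0 n) (w n a k) = w n a ⟨(k : ℕ) - 1, by omega⟩ := by
                funext i
                rw [N0_mulVec, hw ⟨(k : ℕ) - 1, by omega⟩ (by simpa using by omega)]
                split
                · next h =>
                  rw [hw k hkn]
                  simp only [Fin.val_mk]
                  by_cases hik : (i : ℕ) + 1 = (k : ℕ)
                  · rw [if_pos hik, if_pos (by omega)]
                  · rw [if_neg hik, if_neg (by omega)]
                · next h =>
                  rw [if_neg (by simp only [Fin.val_mk]; omega)]
              rw [heq]
              exact Submodule.subset_span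
                ⟨⟨(k : ℕ) - 1, by omega⟩, by simp only [Fin.val_mk]; omega, rfl⟩
            · -- k = n : N0 w_n = 0
              have heq : Matrix.mulVec (N0 n) (w n a k) = 0 := by
                funext i
                rw [N0_mulVec, Pi.zero_apply]
                split
                · next h =>
                  rw [w_apply]
                  simp only [Fin.val_mk]
                  rw [if_neg (by omega), if_pos (by omega)]
                  exact hz _ _ (by omega) (by omega) (by omega) (by rintro ⟨h1, -⟩; omega)
                · rfl
              rw [heq]
              exact Submodule.zero_mem _
        | zero =>
          rw [Matrix.mulVec_zero]
          exact Submodule.zero_mem _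
        | add x y hx hy ihx ihy =>
          rw [Matrix.mulVec_add]
          exact Submodule.add_mem _ ihx ihy
        | smul c x hx ihx =>
          rw [Matrix.mulVec_smul]
          exact Submodule.smul_mem _ _ ihx
    · -- N1
      intro p v hv
      by_cases hp : 1 ≤ p
      · have hv0 : v = 0 := by
          rw [show Filt n a p = ⊥ from if_pos hp] at hv
          simpa using hv
        rw [hv0, Matrix.mulVec_zero]
        exact Submodule.zero_mem _
      · push_neg at hp
        rw [Filt_eq n a (by omega) rfl] at hv
        rw [Filt_eq n a (by omega) rfl]
        induction hv using Submodule.span_induction with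
        | mem u hu =>
          obtain ⟨k, hk, rfl⟩ := hu
          rcases Nat.lt_or_ge (k : ℕ) n with hkn | hkn
          · have heq : Matrix.mulVec (N1 n) (w n a k) = 0 := by
              funext i
              rw [N1_mulVec n hn, Pi.zero_apply]
              split
              · rw [hw k hkn, if_neg (by simpa using by omega), neg_zero]
              · rfl
            rw [heq]
            exact Submodule.zero_mem _
          · have hkn' : (k : ℕ) = n := by have := k.isLt; omega
            have heq : Matrix.mulVec (N1 n) (w n a k)
                = -(w n a ⟨n - 1, by omega⟩) := by
              funext i
              rw [N1_mulVec n hn, Pi.neg_apply, hw ⟨n - 1, by omega⟩ (by simp only [Fin.val_mk]; omega)]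
              simp only [Fin.val_mk]
              split
              · next h =>
                rw [show (⟨n, by omega⟩ : Fin (n + 1)) = k from Fin.ext (by simp only [Fin.val_mk]; omega), w_self,
                  if_pos (by omega)]
              · next h =>
                rw [if_neg (by omega), neg_zero]
            rw [heq]
            exact Submodule.neg_mem _ (Submodule.subset_span
              ⟨⟨n - 1, by omega⟩, by simp only [Fin.val_mk]; omega, rfl⟩)
        | zero =>
          rw [Matrix.mulVec_zero]
          exact Submodule.zero_mem _
        | add x y hx hy ihx ihy =>
          rw [Matrix.mulVec_add]
          exact Submodule.add_mem _ ihx ihy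
        | smul c x hx ihx =>
          rw [Matrix.mulVec_smul]
          exact Submodule.smul_mem _ _ ihx
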